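/- Fix U ⊆ I with U ≠ I and an element i_v ∈ I with i_v ≤ min U. Then Σ_{I_l} (-1)^{|I_l| + |U|} q^{C(I_l) + L*(U | I_l)} = (-1)^{χ(min U ≠ i_v)} q^{C(U ∪ {i_v}) + L*(U | U ∪ {i_v})} · ∏_{i_{t_s} ∈ I \ U \ {i_1,...,i_v}} (1 - q^{g(i_{t_s})}), where the sum is over all subsets I_l with U ⊆ I_l ⊆ I and min I_l = i_v, and g(i_{t_s}) = -Σ_{k=v}^{s-1} χ(i_{t_k} > j_{t_s} > i_v) a_{i_{t_k}} + Σ_{k=s+1}^{m-|U|} (1 - χ(i_{t_k} > j_{t_s} > i_v)) a_{i_{t_k}} with I \ U = {i_{t_1},...,i_{t_{m-|U|}}}, t_1 < ⋯ < t_{m-|U|}. -/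

import Mathlib

open Finsupp
noncomputable section
variable {n m : ℕ}

/-- `min {i_l : l ∈ S}` (with junk value `0` for `S = ∅`). -/
def imin (i : Fin m → Fin (n+1)) (S : Finset (Fin m)) : Fin (n+1) := S.inf i
/-- `t`: the number of paired `j`'s lying below `min {i_l : l ∈ S}`. -/
def tS (i j : Fin m → Fin (n+1)) (S : Finset (Fin m)) : ℕ :=
  (S.filter fun l => j l < imin i S).card
/-- `N(k, I_S)` -/
def NI (i : Fin m → Fin (n+1)) (S : Finset (Fin m)) (k : Fin (n+1)) : ℕ :=
  (S.filter fun l => i l ≤ k).card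
/-- `N(k, J⁺_S)` -/
def NJp (i j : Fin m → Fin (n+1)) (S : Finset (Fin m)) (k : Fin (n+1)) : ℕ :=
  (S.filter fun l => imin i S < j l ∧ j l ≤ k).card
/-- `N(k, J⁻_S)` -/
def NJm (i j : Fin m → Fin (n+1)) (S : Finset (Fin m)) (k : Fin (n+1)) : ℕ :=
  (S.filter fun l => j l < imin i S ∧ j l ≤ k).card
/-- `w_k`: equals `a_k` for `k ∉ T`, `0` for `k ∈ T` (as subsets of `{0,…,n}`). -/
def wgt (i : Fin m → Fin (n+1)) (a : Fin (n+1) → ℕ) (T : Finset (Fin m))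
    (k : Fin (n+1)) : ℤ :=
  if k ∈ T.image i then 0 else (a k : ℤ)
/-- `L*(T | I_S)` of the extended first-layer formula (eq. (6)),
for the pair `(I_S, J_S)` indexed by `S` and a subset `T ⊆ S`. -/
def Lstar (i j : Fin m → Fin (n+1)) (a : Fin (n+1) → ℕ)
    (S T : Finset (Fin m)) : ℤ :=
  (tS i j S : ℤ)
  + ∑ k ∈ Finset.univ.filter (fun k => imin i S ≤ k),
      ((NI i S k : ℤ) - (NJp i j S k : ℤ)) * wgt i a T k
  + ∑ k ∈ Finset.univ.filter (fun k => k < imin i S),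
      ((tS i j S : ℤ) - (NJm i j S k : ℤ)) * (a k : ℤ)
/-- `min 𝕀_k` for the chain (11): `𝕀` corresponding to `r ∈ Sᶜ` is
`I_S ∪ {i_{r'} : r' ∈ Sᶜ, r' ≥ r}`. -/
def mink (i : Fin m → Fin (n+1)) (S : Finset (Fin m)) (r : Fin m) : Fin (n+1) :=
  imin i (S ∪ Sᶜ.filter fun r' => r ≤ r')
/-- `C(I_S)` of equation (12). -/
def Cfun (i j : Fin m → Fin (n+1)) (a : Fin (n+1) → ℕ) (S : Finset (Fin m)) : ℤ :=
  1 + (∑ k, (a k : ℤ)) - (∑ l ∈ S, (a (i l) : ℤ))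
  + ∑ r ∈ Sᶜ, ((NI i S (i r) : ℤ) -
      (((insert r S).filter fun l => mink i S r < j l ∧ j l ≤ i r).card : ℤ))
      * (a (i r) : ℤ)
  - Lstar i j a S S
/-- `g(i_{t_s})` of Lemma 4.1, indexed by the element `p = t_s` of the
complement of `U`; `v` is the index of `i_v = min I_l`. -/
def gfun (i j : Fin m → Fin (n+1)) (a : Fin (n+1) → ℕ) (U : Finset (Fin m))
    (v p : Fin m) : ℤ :=
  - (∑ p' ∈ Uᶜ.filter fun p' => v ≤ p' ∧ p' < p,
      if i v < j p ∧ j p < i p' then (a (i p') : ℤ) else 0)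
  + ∑ p' ∈ Uᶜ.filter fun p' => p < p',
      (1 - if i v < j p ∧ j p < i p' then 1 else 0) * (a (i p') : ℤ)

def qq : RatFunc ℚ := RatFunc.X

/-!
Write `E(S) = C(I_S) + L*(U | I_S)`. In `E(S)` the term `L*(I_S | I_S)` cancels against the
weights of `L*(U | I_S)` on `I_S`, so `E(S)` is `1 + ∑ a_k` plus a combination of the `a_{i_r}`
with counting coefficients `expCoeff`. Adding to `S` an index `p > v` outside `U` leaves the
coefficient of `a_{i_p}` unchanged and shifts that of `a_{i_r}` (`r ∉ U`, `r ≥ v`, `r ≠ p`) by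
`[p < r] - [i_v < j_p < i_r]`, so `E(S ∪ {p}) = E(S) + g(p)`. The admissible `S` are exactly
`(U ∪ {v}) ∪ T` with `T ⊆ {p ∉ U : p > v}`, hence `q^E(S) = q^E(U ∪ {v}) ∏_{p ∈ T} q^g(p)`, and
the signed sum over `T` is the expansion of `∏_p (1 - q^g(p))`. The remaining sign
`(-1)^(|U ∪ {v}| + |U|)` is `-1` exactly when `v ∉ U`, i.e. when `min U ≠ i_v`.
-/

open Finset

lemma zpow_sum₀ {ι G : Type*} [CommGroupWithZero G] {x : G} (hx : x ≠ 0) (s : Finset ι)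
    (f : ι → ℤ) : x ^ (∑ k ∈ s, f k) = ∏ k ∈ s, x ^ f k := by
  classical
  induction s using Finset.induction_on with
  | empty => simp
  | insert q s hq ih => rw [sum_insert hq, prod_insert hq, zpow_add₀ hx, ih]

lemma sum_Icc_eq_sum_powerset_sdiff {α β : Type*} [DecidableEq α] [AddCommMonoid β]
    {s t : Finset α} (h : s ⊆ t) (f : Finset α → β) :
    ∑ u ∈ Icc s t, f u = ∑ w ∈ (t \ s).powerset, f (s ∪ w) := by
  rw [Icc_eq_image_powerset h, sum_image]
  intro w₁ h₁ w₂ h₂ he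
  have hd : ∀ w ∈ (t \ s).powerset, Disjoint s w := fun w hw =>
    disjoint_sdiff.mono_right (mem_powerset.1 hw)
  rw [← union_sdiff_cancel_left (hd w₁ h₁), ← union_sdiff_cancel_left (hd w₂ h₂)]
  exact congrArg (· \ s) he

lemma card_filter_insert {α : Type*} [DecidableEq α] (P : α → Prop) [DecidablePred P]
    {s : Finset α} {x : α} (hx : x ∉ s) :
    #((insert x s).filter P) = #(s.filter P) + if P x then 1 else 0 := by
  rw [filter_insert]
  split_ifs
  · exact card_insert_of_notMem fun h => hx (mem_filter.1 h).1
  · rfl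

lemma neg_one_pow_card_insert_add_card {α R : Type*} [DecidableEq α] [Monoid R] [HasDistribNeg R]
    (v : α) (U : Finset α) :
    (-1 : R) ^ (#(insert v U) + #U) = (-1) ^ (if v ∈ U then 0 else 1) := by
  split_ifs with h
  · rw [insert_eq_of_mem h, ← two_mul, pow_mul, neg_one_sq, one_pow, pow_zero]
  · rw [card_insert_of_notMem h, add_right_comm, ← two_mul, pow_add, pow_mul, neg_one_sq,
      one_pow, one_mul]

lemma filter_superset_forall_le_eq_Icc {α : Type*} [Fintype α] [LinearOrder α]
    (U : Finset α) (v : α) :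
    univ.filter (fun S : Finset α => U ⊆ S ∧ v ∈ S ∧ ∀ l ∈ S, v ≤ l)
      = Icc (insert v U) (univ.filter (v ≤ ·)) := by
  ext S
  simp only [mem_filter, mem_univ, true_and, mem_Icc, insert_subset_iff]
  constructor
  · rintro ⟨hUS, hvS, hS⟩
    exact ⟨⟨hvS, hUS⟩, fun l hl => by simpa using hS l hl⟩
  · rintro ⟨⟨hvS, hUS⟩, hS⟩
    exact ⟨hUS, hvS, fun l hl => by simpa using hS hl⟩

lemma filter_le_sdiff_insert {α : Type*} [Fintype α] [LinearOrder α] (U : Finset α) (v : α) :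
    univ.filter (v ≤ ·) \ insert v U = Uᶜ.filter (v < ·) := by
  ext l
  simp only [mem_sdiff, mem_filter, mem_univ, true_and, mem_insert, mem_compl, not_or,
    lt_iff_le_and_ne, ne_comm (a := v)]
  tauto

section Exponent
variable {i j : Fin m → Fin (n+1)} {a : Fin (n+1) → ℕ}

lemma imin_eq_of_forall_le (hi : Monotone i) {S : Finset (Fin m)} {v : Fin m}
    (hvS : v ∈ S) (hS : ∀ l ∈ S, v ≤ l) : imin i S = i v :=
  le_antisymm (inf_le hvS) (Finset.le_inf fun l hl => hi (hS l hl))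

lemma imin_eq_iff_mem (hi : StrictMono i) {U : Finset (Fin m)} (hU : U.Nonempty) {v : Fin m}
    (hv : ∀ l ∈ U, v ≤ l) : imin i U = i v ↔ v ∈ U := by
  refine ⟨fun h => ?_, fun h => imin_eq_of_forall_le hi.monotone h hv⟩
  obtain ⟨u, hu, hinf⟩ := exists_mem_eq_inf U hU i
  rw [imin, hinf] at h
  exact hi.injective h ▸ hu

lemma mink_eq (hi : Monotone i) {S : Finset (Fin m)} {v r : Fin m}
    (hvS : v ∈ S) (hS : ∀ l ∈ S, v ≤ l) (hr : r ∉ S) : mink i S r = i (min v r) := by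
  refine imin_eq_of_forall_le hi ?_ fun l hl => ?_
  · rcases min_choice v r with h | h <;> rw [h]
    · exact mem_union_left _ hvS
    · exact mem_union_right _ (mem_filter.2 ⟨mem_compl.2 hr, le_rfl⟩)
  · rcases mem_union.1 hl with hl | hl
    · exact (min_le_left _ _).trans (hS l hl)
    · exact (min_le_right _ _).trans (mem_filter.1 hl).2

lemma NI_insert {S : Finset (Fin m)} {p : Fin m} (hp : p ∉ S) (k : Fin (n+1)) :
    (NI i (insert p S) k : ℤ) = NI i S k + if i p ≤ k then 1 else 0 := by
  rw [NI, card_filter_insert _ hp]; push_cast; rfl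

lemma NJp_insert {S : Finset (Fin m)} {p : Fin m} (hp : p ∉ S)
    (hmin : imin i (insert p S) = imin i S) (k : Fin (n+1)) :
    (NJp i j (insert p S) k : ℤ) = NJp i j S k + if imin i S < j p ∧ j p ≤ k then 1 else 0 := by
  rw [NJp, NJp, hmin, card_filter_insert _ hp]; push_cast; rfl

lemma wgt_sub_wgt (hi : Function.Injective i) {S T : Finset (Fin m)} (hTS : T ⊆ S)
    (k : Fin (n+1)) :
    wgt i a T k - wgt i a S k = if k ∈ (S \ T).image i then (a k : ℤ) else 0 := by
  have hST := image_subset_image (f := i) hTS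
  rw [image_sdiff _ _ hi, wgt, wgt]
  by_cases hS : k ∈ S.image i <;> by_cases hT : k ∈ T.image i <;> simp [hS, hT]
  exact absurd (hST hT) hS

lemma Lstar_sub_Lstar_self (hi : Function.Injective i) {S T : Finset (Fin m)} (hTS : T ⊆ S) :
    Lstar i j a S T - Lstar i j a S S
      = ∑ l ∈ S \ T, ((NI i S (i l) : ℤ) - NJp i j S (i l)) * a (i l) := by
  have hsub : (S \ T).image i ⊆ univ.filter (imin i S ≤ ·) := by
    simp only [subset_iff, mem_image, mem_filter, mem_univ, true_and]
    rintro _ ⟨l, hl, rfl⟩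
    exact inf_le (mem_sdiff.1 hl).1
  have hsum : ∀ f : Fin (n+1) → ℤ,
      ∑ k ∈ univ.filter (imin i S ≤ ·), f k * wgt i a T k
        - ∑ k ∈ univ.filter (imin i S ≤ ·), f k * wgt i a S k
        = ∑ l ∈ S \ T, f (i l) * a (i l) := fun f => by
    simp_rw [← sum_sub_distrib, ← mul_sub, wgt_sub_wgt hi hTS, mul_ite, mul_zero]
    rw [sum_ite_mem, inter_eq_right.2 hsub, sum_image hi.injOn]
  unfold Lstar
  linear_combination hsum fun k => (NI i S k : ℤ) - NJp i j S k

def expCoeff (i j : Fin m → Fin (n+1)) (S T : Finset (Fin m)) (r : Fin m) : ℤ :=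
  if r ∈ T then -1
  else if r ∈ S then NI i S (i r) - NJp i j S (i r) - 1
  else NI i S (i r) - #((insert r S).filter fun l => mink i S r < j l ∧ j l ≤ i r)

lemma Cfun_add_Lstar (hi : Function.Injective i) {S T : Finset (Fin m)} (hTS : T ⊆ S) :
    Cfun i j a S + Lstar i j a S T
      = 1 + ∑ k, (a k : ℤ) + ∑ r, expCoeff i j S T r * a (i r) := by
  have hT : ∑ r ∈ T, expCoeff i j S T r * a (i r) = -∑ r ∈ T, (a (i r) : ℤ) := by
    rw [← sum_neg_distrib]
    exact sum_congr rfl fun r hr => by simp [expCoeff, hr]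
  have hST : ∑ r ∈ S \ T, expCoeff i j S T r * a (i r)
      = ∑ l ∈ S \ T, ((NI i S (i l) : ℤ) - NJp i j S (i l)) * a (i l)
        - ∑ r ∈ S \ T, (a (i r) : ℤ) := by
    rw [← sum_sub_distrib]
    refine sum_congr rfl fun r hr => ?_
    obtain ⟨hrS, hrT⟩ := mem_sdiff.1 hr
    simp only [expCoeff, if_neg hrT, if_pos hrS]
    ring
  have hSc : ∑ r ∈ Sᶜ, expCoeff i j S T r * a (i r)
      = ∑ r ∈ Sᶜ, ((NI i S (i r) : ℤ) -
          #((insert r S).filter fun l => mink i S r < j l ∧ j l ≤ i r)) * a (i r) :=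
    sum_congr rfl fun r hr => by
      have hrS := mem_compl.1 hr
      simp only [expCoeff, if_neg hrS, if_neg fun h => hrS (hTS h)]
  rw [← sum_add_sum_compl S, ← sum_sdiff hTS, hT, hST, hSc, Cfun,
    ← sum_sdiff hTS (f := fun r => (a (i r) : ℤ))]
  linear_combination Lstar_sub_Lstar_self (j := j) (a := a) hi hTS

lemma expCoeff_insert_self_sub (hi : Monotone i) {S T : Finset (Fin m)} {v p : Fin m}
    (hvS : v ∈ S) (hS : ∀ l ∈ S, v ≤ l) (hTS : T ⊆ S) (hp : p ∉ S) (hvp : v ≤ p) :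
    expCoeff i j (insert p S) T p - expCoeff i j S T p = 0 := by
  have hmin : imin i (insert p S) = i v :=
    imin_eq_of_forall_le hi (mem_insert_of_mem hvS) (forall_mem_insert _ _ _ |>.2 ⟨hvp, hS⟩)
  simp only [expCoeff, if_neg fun h => hp (hTS h), if_neg hp, if_pos (mem_insert_self p S),
    mink_eq hi hvS hS hp, min_eq_left hvp, NI_insert hp, ← hmin, NJp, le_refl, if_true]
  ring

lemma expCoeff_insert_sub_of_ne (hi : Monotone i) {S T : Finset (Fin m)} {v p r : Fin m}
    (hvS : v ∈ S) (hS : ∀ l ∈ S, v ≤ l) (hp : p ∉ S) (hvp : v ≤ p) (hrT : r ∉ T)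
    (hrp : r ≠ p) :
    expCoeff i j (insert p S) T r - expCoeff i j S T r
      = (if i p ≤ i r then 1 else 0) - if i (min v r) < j p ∧ j p ≤ i r then 1 else 0 := by
  have hS' : ∀ l ∈ insert p S, v ≤ l := forall_mem_insert _ _ _ |>.2 ⟨hvp, hS⟩
  have hvS' : v ∈ insert p S := mem_insert_of_mem hvS
  by_cases hrS : r ∈ S
  · have hmin : imin i (insert p S) = imin i S := by
      rw [imin_eq_of_forall_le hi hvS' hS', imin_eq_of_forall_le hi hvS hS]
    simp only [expCoeff, if_neg hrT, if_pos hrS, if_pos (mem_insert_of_mem hrS), NI_insert hp,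
      NJp_insert hp hmin, imin_eq_of_forall_le hi hvS hS, min_eq_left (hS r hrS)]
    ring
  · have hrS' : r ∉ insert p S := by simp [hrp, hrS]
    have hpS : p ∉ insert r S := by simp [hrp.symm, hp]
    simp only [expCoeff, if_neg hrT, if_neg hrS, if_neg hrS', NI_insert hp,
      mink_eq hi hvS' hS' hrS', mink_eq hi hvS hS hrS, insert_comm r p,
      card_filter_insert _ hpS]
    push_cast
    ring

def gTerm (i j : Fin m → Fin (n+1)) (U : Finset (Fin m)) (v p r : Fin m) : ℤ :=
  if r ∉ U ∧ v ≤ r ∧ r ≠ p then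
    (if p < r then 1 else 0) - if i v < j p ∧ j p < i r then 1 else 0
  else 0

lemma expCoeff_insert_sub (hi : StrictMono i) (hij : ∀ k l, i k ≠ j l)
    {S T : Finset (Fin m)} {v p : Fin m} (hvS : v ∈ S) (hS : ∀ l ∈ S, v ≤ l) (hTS : T ⊆ S)
    (hp : p ∉ S) (hvp : v < p) (r : Fin m) :
    expCoeff i j (insert p S) T r - expCoeff i j S T r = gTerm i j T v p r := by
  by_cases hrT : r ∈ T
  · simp [expCoeff, gTerm, hrT]
  obtain rfl | hrp := eq_or_ne r p
  · simp [expCoeff_insert_self_sub hi.monotone hvS hS hTS hp hvp.le, gTerm]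
  rw [expCoeff_insert_sub_of_ne hi.monotone hvS hS hp hvp.le hrT hrp]
  rcases le_or_gt v r with hvr | hrv
  · simp only [gTerm, min_eq_left hvr, hi.le_iff_le, hrp.symm.le_iff_lt,
      (hij r p).symm.le_iff_lt, hrT, hvr, hrp, not_false_eq_true, ne_eq, and_self, if_true]
  · have hpr : ¬ i p ≤ i r := hi.le_iff_le.not.2 (hrv.trans hvp).not_ge
    have hjp : ¬ (i r < j p ∧ j p ≤ i r) := fun h => (h.1.trans_le h.2).false
    simp [gTerm, min_eq_right hrv.le, hpr, hjp, hrv.not_ge]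

lemma sum_gTerm_mul (a : Fin (n+1) → ℕ) (U : Finset (Fin m)) {v p : Fin m} (hvp : v < p) :
    ∑ r, gTerm i j U v p r * a (i r) = gfun i j a U v p := by
  rw [← sum_add_sum_compl U, sum_eq_zero fun r hr => by simp [gTerm, hr], zero_add]
  simp only [gfun, sum_filter, ← sum_neg_distrib, ← sum_add_distrib]
  refine sum_congr rfl fun r hr => ?_
  have hrU := mem_compl.1 hr
  rcases lt_trichotomy r p with hrp | rfl | hpr
  · simp [gTerm, hrU, hrp, hrp.ne, hrp.not_gt, apply_ite Neg.neg]
  · simp [gTerm]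
  · simp [gTerm, hrU, hpr, hpr.ne', hpr.not_gt, hvp.le.trans hpr.le]

lemma Cfun_add_Lstar_insert (hi : StrictMono i) (hij : ∀ k l, i k ≠ j l)
    {S U : Finset (Fin m)} {v p : Fin m} (hvS : v ∈ S) (hS : ∀ l ∈ S, v ≤ l) (hUS : U ⊆ S)
    (hp : p ∉ S) (hvp : v < p) :
    Cfun i j a (insert p S) + Lstar i j a (insert p S) U
      = Cfun i j a S + Lstar i j a S U + gfun i j a U v p := by
  rw [Cfun_add_Lstar hi.injective (hUS.trans (subset_insert p S)), Cfun_add_Lstar hi.injective hUS,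
    ← sum_gTerm_mul a U hvp]
  simp_rw [← expCoeff_insert_sub hi hij hvS hS hUS hp hvp, sub_mul, sum_sub_distrib]
  ring

lemma Cfun_add_Lstar_union (hi : StrictMono i) (hij : ∀ k l, i k ≠ j l)
    {B U T : Finset (Fin m)} {v : Fin m} (hvB : v ∈ B) (hB : ∀ l ∈ B, v ≤ l) (hUB : U ⊆ B)
    (hT : ∀ p ∈ T, v < p) (hBT : Disjoint B T) :
    Cfun i j a (B ∪ T) + Lstar i j a (B ∪ T) U
      = Cfun i j a B + Lstar i j a B U + ∑ p ∈ T, gfun i j a U v p := by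
  induction T using Finset.induction_on with
  | empty => simp
  | insert q T hq ih =>
    rw [forall_mem_insert] at hT
    rw [disjoint_insert_right] at hBT
    have hBT' : ∀ l ∈ B ∪ T, v ≤ l := by
      simp only [mem_union]
      rintro l (hl | hl)
      exacts [hB l hl, (hT.2 l hl).le]
    rw [union_insert, Cfun_add_Lstar_insert hi hij (mem_union_left T hvB) hBT'
      (hUB.trans subset_union_left) (by simp [hq, hBT.1]) hT.1, ih hT.2 hBT.2, sum_insert hq]
    ring

end Exponent

theorem lem_factor_general (i j : Fin m → Fin (n+1)) (hi : StrictMono i)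
    (hij : ∀ k l, i k ≠ j l) (a : Fin (n+1) → ℕ)
    (U : Finset (Fin m)) (hU : U.Nonempty)
    (v : Fin m) (hv : ∀ l ∈ U, v ≤ l) :
    (∑ S ∈ Finset.univ.filter
        (fun S : Finset (Fin m) => U ⊆ S ∧ v ∈ S ∧ ∀ l ∈ S, v ≤ l),
      (-1 : RatFunc ℚ) ^ (S.card + U.card) * qq ^ (Cfun i j a S + Lstar i j a S U))
    = (-1 : RatFunc ℚ) ^ (if imin i U = i v then 0 else 1) *
        qq ^ (Cfun i j a (insert v U) + Lstar i j a (insert v U) U) *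
        ∏ p ∈ Uᶜ.filter (fun p => v < p), (1 - qq ^ gfun i j a U v p) := by
  have hB : ∀ l ∈ insert v U, v ≤ l := forall_mem_insert _ _ _ |>.2 ⟨le_rfl, hv⟩
  have hrange : univ.filter (fun S : Finset (Fin m) => U ⊆ S ∧ v ∈ S ∧ ∀ l ∈ S, v ≤ l)
      = Icc (insert v U) (univ.filter (v ≤ ·)) := by
    -- `convert`: the statement uses `Fin`'s own `≤` and its decidability, not `LinearOrder`'s
    convert filter_superset_forall_le_eq_Icc U v
  have hP := filter_le_sdiff_insert U v
  rw [hrange, sum_Icc_eq_sum_powerset_sdiff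
    fun l hl => by simpa using hB l hl, hP, prod_sub, Finset.mul_sum]
  refine sum_congr rfl fun T hT => ?_
  have hTP : T ⊆ Uᶜ.filter (v < ·) := mem_powerset.1 hT
  have hq : qq ≠ 0 := RatFunc.X_ne_zero
  have hBT : Disjoint (insert v U) T := disjoint_sdiff.mono_right (hP ▸ hTP)
  rw [Cfun_add_Lstar_union hi hij (mem_insert_self v U) hB (subset_insert v U)
      (fun p hp => (mem_filter.1 (hTP hp)).2) hBT, zpow_add₀ hq, zpow_sum₀ hq,
    card_union_of_disjoint hBT, add_right_comm, pow_add,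
    neg_one_pow_card_insert_add_card]
  simp only [imin_eq_iff_mem hi hU hv, prod_const_one, mul_one]
  ring

/-- The factorization part of Lemma 4.3 ('lem-factor').  The sum ranges over
all `I_l` (index sets `S`) with `U ⊆ I_l ⊆ I` and `min I_l = i_v`. -/
theorem lem_factor (i j : Fin m → Fin (n+1)) (hi : StrictMono i)
    (hj : Monotone j) (hij : ∀ k l, i k ≠ j l) (a : Fin (n+1) → ℕ)
    (U : Finset (Fin m)) (hU : U.Nonempty) (hUne : U ≠ Finset.univ)
    (v : Fin m) (hv : ∀ l ∈ U, v ≤ l) :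
    (∑ S ∈ Finset.univ.filter
        (fun S : Finset (Fin m) => U ⊆ S ∧ v ∈ S ∧ ∀ l ∈ S, v ≤ l),
      (-1 : RatFunc ℚ) ^ (S.card + U.card) * qq ^ (Cfun i j a S + Lstar i j a S U))
    = (-1 : RatFunc ℚ) ^ (if imin i U = i v then 0 else 1) *
        qq ^ (Cfun i j a (insert v U) + Lstar i j a (insert v U) U) *
        ∏ p ∈ Uᶜ.filter (fun p => v < p), (1 - qq ^ gfun i j a U v p) :=
  lem_factor_general i j hi hij a U hU v hv
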